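/- In the abstract affects setting, let T be a conical poset, let O be injective (non-degenerate embedding), and suppose O satisfies compat with respect to A. If A(X,Y,Z) holds and is Irred₃, then F̄_s(X) ∩ F̄_s(Y) ⊆ F̄_s(Z). -/

import Mathlib

/-!
Write `U = X ∪ Y ∪ Z`. For `z ∈ Z`, Irred₃ applied to `{z}` gives a relation
`{z} ⊨ Y | do(W)` with `W ⊆ X ∪ (Z ∖ {z})`; a singleton cause is trivially Irred₁, so compat
yields `F̄_s(U ∖ {z}) ⊆ J⁺(O z)`: the point `O z` is redundant in `O(U)`. Conicality then forces
`span(O(U)) = span(O(U) ∖ {O z})`, so `span(O(U)) ⊆ O(X ∪ Y)`. As a finite set and its span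
have the same joint future, `F̄_s(X) ∩ F̄_s(Y) ⊆ f(span(O(U))) = F̄_s(U) ⊆ F̄_s(Z)`.
-/
/-- The causal future `J⁺(t) = {t' : t ≤ t'}` of a point in a partially ordered set. -/
def Jplus {T : Type*} [PartialOrder T] (t : T) : Set T := {t' : T | t ≤ t'}

/-- The support future `F̄_s(W) = ⋂_{w ∈ W} J⁺(O w)` of a finite set of random
variable labels under an embedding `O` (with `F̄_s(∅) = T`). -/
def suppFuture {S T : Type*} [PartialOrder T] (O : S → T) (W : Finset S) : Set T :=
  ⋂ w ∈ W, Jplus (O w)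

/-- `X ⊨ Y|do(Z)` is Irred₁ (relative to the set of affects relations `A`) if for
every nonempty strict subset `s_X ⊊ X`, `A s_X Y ((X∖s_X) ∪ Z)` holds. -/
def Irred1 {S : Type*} [DecidableEq S] (A : Finset S → Finset S → Finset S → Prop)
    (X Y Z : Finset S) : Prop :=
  ∀ sX : Finset S, sX ⊆ X → sX.Nonempty → sX ≠ X → A sX Y ((X \ sX) ∪ Z)

/-- `X ⊨ Y|do(Z)` is Irred₃ (relative to `A`) if for every nonempty `s_Z ⊆ Z`,
`A s_Z Y (X ∪ (Z∖s_Z))` holds or `A s_Z Y (Z∖s_Z)` holds. -/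
def Irred3 {S : Type*} [DecidableEq S] (A : Finset S → Finset S → Finset S → Prop)
    (X Y Z : Finset S) : Prop :=
  ∀ sZ : Finset S, sZ ⊆ Z → sZ.Nonempty →
    (A sZ Y (X ∪ (Z \ sZ)) ∨ A sZ Y (Z \ sZ))

/-- The embedding `O` satisfies compat with respect to `A` if for every triple of
pairwise disjoint finite sets with `X, Y` nonempty such that `A X Y Z` holds and is
Irred₁, one has `F̄_s(Y ∪ Z) ⊆ F̄_s(X)`. -/
def Compat {S T : Type*} [DecidableEq S] [PartialOrder T]
    (A : Finset S → Finset S → Finset S → Prop) (O : S → T) : Prop :=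
  ∀ X Y Z : Finset S, Disjoint X Y → Disjoint X Z → Disjoint Y Z →
    X.Nonempty → Y.Nonempty → A X Y Z → Irred1 A X Y Z →
    suppFuture O (Y ∪ Z) ⊆ suppFuture O X

/-- The joint future `f(L) = ⋂_{p ∈ L} J⁺(p)` of a subset of a poset (with `f(∅) = T`). -/
def jointFuture {T : Type*} [PartialOrder T] (L : Set T) : Set T := ⋂ p ∈ L, Jplus p

/-- The spanning set `span(L)`: the union of all subsets `L' ⊆ L` with
`f(L') = f(L)` such that no strict subset `L'' ⊊ L'` satisfies `f(L'') = f(L)`. -/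
def spanS {T : Type*} [PartialOrder T] (L : Set T) : Set T :=
  {x : T | ∃ L' : Set T, L' ⊆ L ∧ x ∈ L' ∧ jointFuture L' = jointFuture L ∧
    ∀ L'' : Set T, L'' ⊂ L' → jointFuture L'' ≠ jointFuture L}

/-- A poset is conical if for all nonempty finite subsets `L₁, L₂`,
`f(L₁) = f(L₂)` implies `span(L₁) = span(L₂)`. -/
def Conical (T : Type*) [PartialOrder T] : Prop :=
  ∀ L₁ L₂ : Set T, L₁.Finite → L₂.Finite → L₁.Nonempty → L₂.Nonempty →
    jointFuture L₁ = jointFuture L₂ → spanS L₁ = spanS L₂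

section Poset

variable {T : Type*} [PartialOrder T]

theorem jointFuture_antitone : Antitone (jointFuture : Set T → Set T) :=
  fun _ _ h => Set.biInter_subset_biInter_left h

theorem jointFuture_union (L₁ L₂ : Set T) :
    jointFuture (L₁ ∪ L₂) = jointFuture L₁ ∩ jointFuture L₂ :=
  Set.biInter_union _ _ _

theorem spanS_subset (L : Set T) : spanS L ⊆ L := fun _ ⟨_, hL', hx, _⟩ => hL' hx

theorem jointFuture_spanS {L : Set T} (hL : L.Finite) : jointFuture (spanS L) = jointFuture L := by
  obtain ⟨M, ⟨hML, hM⟩, hmin⟩ := (hL.finite_subsets.subset fun _ h => h.1 :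
      {M : Set T | M ⊆ L ∧ jointFuture M = jointFuture L}.Finite).exists_minimal
    ⟨L, subset_rfl, rfl⟩
  have hMspan : M ⊆ spanS L := fun x hx =>
    ⟨M, hML, hx, hM, fun L'' hL'' hf =>
      hL''.not_ge (hmin ⟨hL''.subset.trans hML, hf⟩ hL''.subset)⟩
  exact (jointFuture_antitone (spanS_subset L)).antisymm'
    (hM ▸ jointFuture_antitone hMspan)

theorem jointFuture_singleton (p : T) : jointFuture {p} = Jplus p := Set.biInter_singleton _ _

theorem jointFuture_diff_singleton_of_subset {L : Set T} {p : T} (hp : p ∈ L)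
    (h : jointFuture (L \ {p}) ⊆ Jplus p) : jointFuture (L \ {p}) = jointFuture L :=
  calc jointFuture (L \ {p}) = jointFuture {p} ∩ jointFuture (L \ {p}) :=
        (Set.inter_eq_right.2 (jointFuture_singleton p ▸ h)).symm
    _ = jointFuture L := by
        rw [← jointFuture_union, Set.singleton_union, Set.insert_sdiff_singleton,
          Set.insert_eq_of_mem hp]

theorem Conical.notMem_spanS (hT : Conical T) {L : Set T} (hL : L.Finite) {p : T}
    (hne : (L \ {p}).Nonempty) (h : jointFuture (L \ {p}) ⊆ Jplus p) : p ∉ spanS L := by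
  intro hp
  have hspan : spanS L = spanS (L \ {p}) :=
    hT L (L \ {p}) hL hL.sdiff (hne.mono Set.sdiff_subset) hne
      (jointFuture_diff_singleton_of_subset (spanS_subset L hp) h).symm
  exact (spanS_subset _ (hspan ▸ hp)).2 rfl

end Poset

section Affects

variable {S T : Type*} [PartialOrder T]

theorem suppFuture_eq_jointFuture_image (O : S → T) (W : Finset S) :
    suppFuture O W = jointFuture (O '' W) :=
  Set.biInter_image.symm

theorem suppFuture_antitone (O : S → T) : Antitone (suppFuture O) :=
  fun _ _ h => Set.biInter_subset_biInter_left (Finset.coe_subset.2 h)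

variable [DecidableEq S]

theorem suppFuture_union (O : S → T) (W₁ W₂ : Finset S) :
    suppFuture O (W₁ ∪ W₂) = suppFuture O W₁ ∩ suppFuture O W₂ := by
  simp only [suppFuture_eq_jointFuture_image, Finset.coe_union, Set.image_union,
    jointFuture_union]

theorem irred1_singleton (A : Finset S → Finset S → Finset S → Prop) (z : S) (Y W : Finset S) :
    Irred1 A {z} Y W := fun _ hsub hne hneq =>
  absurd ((Finset.subset_singleton_iff.1 hsub).resolve_left hne.ne_empty) hneq

variable {A : Finset S → Finset S → Finset S → Prop} {O : S → T}

theorem Compat.suppFuture_subset_Jplus (hc : Compat A O) {z : S} {Y W : Finset S}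
    (hzY : z ∉ Y) (hzW : z ∉ W) (hYW : Disjoint Y W) (hY : Y.Nonempty) (hA : A {z} Y W) :
    suppFuture O (Y ∪ W) ⊆ Jplus (O z) := by
  simpa [suppFuture] using hc {z} Y W (by simpa) (by simpa) hYW (Finset.singleton_nonempty z) hY hA
    (irred1_singleton A z Y W)

theorem Irred3.suppFuture_erase_subset_Jplus (hc : Compat A O) {X Y Z : Finset S}
    (hXY : Disjoint X Y) (hXZ : Disjoint X Z) (hYZ : Disjoint Y Z) (hY : Y.Nonempty)
    (h3 : Irred3 A X Y Z) {z : S} (hz : z ∈ Z) :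
    suppFuture O ((X ∪ Y ∪ Z).erase z) ⊆ Jplus (O z) := by
  have hzX : z ∉ X := Finset.disjoint_right.1 hXZ hz
  have hzY : z ∉ Y := Finset.disjoint_right.1 hYZ hz
  have hdisj : Disjoint Y (X ∪ Z.erase z) :=
    Finset.disjoint_union_right.2 ⟨hXY.symm, hYZ.mono_right (Finset.erase_subset z Z)⟩
  have hsub : Y ∪ (X ∪ Z.erase z) ⊆ (X ∪ Y ∪ Z).erase z := by
    intro a
    grind
  suffices ∃ W ⊆ X ∪ Z.erase z, A {z} Y W by
    obtain ⟨W, hW, hA⟩ := this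
    refine (suppFuture_antitone O ((Finset.union_subset_union_right hW).trans hsub)).trans ?_
    exact hc.suppFuture_subset_Jplus hzY (fun h => by simpa [hzX] using hW h)
      (hdisj.mono_right hW) hY hA
  rcases h3 {z} (by simpa) (Finset.singleton_nonempty z) with h | h
  · exact ⟨_, by simp [Finset.sdiff_singleton_eq_erase], h⟩
  · exact ⟨_, by simp [Finset.sdiff_singleton_eq_erase], h⟩

theorem Irred3.notMem_spanS (hT : Conical T) (hO : Function.Injective O) (hc : Compat A O)
    {X Y Z : Finset S} (hXY : Disjoint X Y) (hXZ : Disjoint X Z) (hYZ : Disjoint Y Z)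
    (hY : Y.Nonempty) (h3 : Irred3 A X Y Z) {z : S} (hz : z ∈ Z) :
    O z ∉ spanS (O '' ↑(X ∪ Y ∪ Z)) := by
  have himage : O '' ↑(X ∪ Y ∪ Z) \ {O z} = O '' ↑((X ∪ Y ∪ Z).erase z) := by
    rw [Finset.coe_erase, Set.image_sdiff hO, Set.image_singleton]
  obtain ⟨y, hy⟩ := hY
  have hyz : y ≠ z := ne_of_mem_of_not_mem hy (Finset.disjoint_right.1 hYZ hz)
  refine hT.notMem_spanS (Set.toFinite _) ?_ ?_ <;> rw [himage]
  · exact ⟨O y, y, Finset.mem_erase.2 ⟨hyz, by simp [hy]⟩, rfl⟩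
  · rw [← suppFuture_eq_jointFuture_image]
    exact h3.suppFuture_erase_subset_Jplus hc hXY hXZ hYZ ⟨y, hy⟩ hz

end Affects

theorem compat_conical_irred3_general {S T : Type*} [DecidableEq S] [PartialOrder T]
    (A : Finset S → Finset S → Finset S → Prop) (O : S → T)
    (hT : Conical T) (hO : Function.Injective O) (hc : Compat A O)
    (X Y Z : Finset S)
    (hXY : Disjoint X Y) (hXZ : Disjoint X Z) (hYZ : Disjoint Y Z)
    (hY : Y.Nonempty)
    (h3 : Irred3 A X Y Z) :
    suppFuture O X ∩ suppFuture O Y ⊆ suppFuture O Z := by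
  have hspan : spanS (O '' ↑(X ∪ Y ∪ Z)) ⊆ O '' ↑(X ∪ Y) := by
    rintro _ hp
    obtain ⟨u, hu, rfl⟩ := spanS_subset _ hp
    have huZ : u ∉ Z := fun hz => h3.notMem_spanS hT hO hc hXY hXZ hYZ hY hz hp
    exact ⟨u, by simpa [huZ] using hu, rfl⟩
  calc suppFuture O X ∩ suppFuture O Y = jointFuture (O '' ↑(X ∪ Y)) := by
        rw [← suppFuture_union, suppFuture_eq_jointFuture_image]
    _ ⊆ jointFuture (spanS (O '' ↑(X ∪ Y ∪ Z))) := jointFuture_antitone hspan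
    _ = suppFuture O (X ∪ Y ∪ Z) := by
        rw [jointFuture_spanS (Set.toFinite _), suppFuture_eq_jointFuture_image]
    _ ⊆ suppFuture O Z := suppFuture_antitone O Finset.subset_union_right

/-- In a conical space-time with a non-degenerate (injective) compatible embedding,
an affects relation `A X Y Z` that is Irred₃ satisfies
`F̄_s(X) ∩ F̄_s(Y) ⊆ F̄_s(Z)`. -/
theorem compat_conical_irred3 {S T : Type*} [DecidableEq S] [PartialOrder T]
    (A : Finset S → Finset S → Finset S → Prop) (O : S → T)
    (hT : Conical T) (hO : Function.Injective O) (hc : Compat A O)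
    (X Y Z : Finset S)
    (hXY : Disjoint X Y) (hXZ : Disjoint X Z) (hYZ : Disjoint Y Z)
    (hX : X.Nonempty) (hY : Y.Nonempty)
    (hA : A X Y Z) (h3 : Irred3 A X Y Z) :
    suppFuture O X ∩ suppFuture O Y ⊆ suppFuture O Z :=
  compat_conical_irred3_general A O hT hO hc X Y Z hXY hXZ hYZ hY h3
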